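/- arXiv:1308.1545 — 4 statements merged into one kernel-verified Lean document; each statement's English description precedes it below -/
import Mathlib

section
/- With τ = Σ_{A ∈ {−1,1}^M} Δ_A · exp(Σ_j α_j θ_j) and τ_H the Hirota tau function τ_H = Σ_{μ ∈ {0,1}^M} exp(Σ_j μ_j η_j + Σ_{j<k} b_{jk} μ_j μ_k), one has τ_H = (1/Δ_{(−1,...,−1)}) · exp(θ_1 + ... + θ_M) · τ, under the identification μ_j = (α_j+1)/2 and a suitable shift of the constants: η_j = 2θ_j + log ∏_{k≠j} |(p_k+p_j)/(p_k−p_j)|, where b_{jk} = log[(p_k−p_j)²/(p_k+p_j)²]. -/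
/-!
With `μ_j = (1 + α_j)/2` the `θ`-part of the Hirota exponent is `∑ (1 + α_j) θ_j`, which produces
the factor `exp (∑ θ_j) * exp (∑ α_j θ_j)`. The logarithms inside `η_j` redistribute over the pairs
`j < k`, and for each pair, with `L = log |(p_k + p_j)/(p_k - p_j)|` and `b_{jk} = -2L`, the exponent
`μ_j L + μ_k L + b_{jk} μ_j μ_k` exponentiates to `|α_k p_k - α_j p_j| / |p_k - p_j|` (four sign
cases). The product of these ratios over all pairs is `Δ_A / Δ_{(-1,…,-1)}`.
-/

open Finset Real

/-- sign associated to a Boolean: `true ↦ 1`, `false ↦ -1` -/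
def sgn (b : Bool) : ℝ := if b then 1 else -1

/-- `μ_j = (α_j + 1)/2 ∈ {0,1}` -/
def mu (b : Bool) : ℝ := if b then 1 else 0

/-- absolute value of the Vandermonde determinant of `(α_1 p_1, …, α_M p_M)` -/
def Δ {M : ℕ} (p : Fin M → ℝ) (A : Fin M → Bool) : ℝ :=
  |∏ k, ∏ j ∈ Finset.Iio k, (sgn (A k) * p k - sgn (A j) * p j)|

theorem sum_sum_erase_eq_sum_sum_Iio {ι M : Type*} [Fintype ι] [LinearOrder ι]
    [LocallyFiniteOrderTop ι] [LocallyFiniteOrderBot ι] [AddCommMonoid M] (f : ι → ι → M) :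
    ∑ j, ∑ k ∈ univ.erase j, f j k = ∑ k, ∑ j ∈ Iio k, (f j k + f k j) := by
  have hsplit (j : ι) : ∑ k ∈ univ.erase j, f j k = ∑ k ∈ Ioi j, f j k + ∑ k ∈ Iio j, f j k := by
    rw [← compl_singleton, ← Ioi_disjUnion_Iio, sum_disjUnion]
  simp only [hsplit, sum_add_distrib]
  rw [sum_comm' (t' := univ) (s' := Iio) (by simp)]

theorem sum_mu_mul_two_mul {ι : Type*} (s : Finset ι) (α : ι → Bool) (θ : ι → ℝ) :
    ∑ j ∈ s, mu (α j) * (2 * θ j) = ∑ j ∈ s, θ j + ∑ j ∈ s, sgn (α j) * θ j := by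
  rw [← sum_add_distrib]
  refine sum_congr rfl fun j _ => ?_
  cases α j <;> simp only [sgn, mu, Bool.false_eq_true, if_true, if_false] <;> ring

theorem exp_pair_exponent {x y : ℝ} (hadd : y + x ≠ 0) (hne : y ≠ x) (a b : Bool) :
    exp (mu a * log |(y + x) / (y - x)| + mu b * log |(x + y) / (x - y)|
        + log ((y - x) ^ 2 / (y + x) ^ 2) * mu a * mu b) =
      |sgn b * y - sgn a * x| / |y - x| := by
  set r := |(y + x) / (y - x)| with hr
  have hsub : y - x ≠ 0 := sub_ne_zero.2 hne
  have hr0 : 0 < r := abs_pos.2 (div_ne_zero hadd hsub)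
  have hswap : |(x + y) / (x - y)| = r := by
    rw [hr, ← neg_sub, div_neg, abs_neg, add_comm]
  have hb : log ((y - x) ^ 2 / (y + x) ^ 2) = -2 * log r := by
    rw [show (y - x) ^ 2 / (y + x) ^ 2 = (r ^ 2)⁻¹ by rw [hr, sq_abs, div_pow, inv_div],
      log_inv, log_pow]
    push_cast; ring
  rw [hswap, hb]
  cases a <;> cases b <;>
    simp only [mu, sgn, Bool.false_eq_true, ↓reduceIte, zero_mul, one_mul, zero_add, add_zero,
      neg_mul, mul_zero, mul_one, exp_zero, sub_neg_eq_add]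
  · rw [neg_add_eq_sub, abs_sub_comm, div_self (abs_ne_zero.2 hsub)]
  · rw [exp_log hr0, hr, abs_div]
  · rw [exp_log hr0, hr, abs_div, ← neg_add', abs_neg]
  · rw [show log r + log r + -(2 * log r) = 0 by ring, exp_zero, div_self (abs_ne_zero.2 hsub)]

section Vandermonde

variable {M : ℕ} {p : Fin M → ℝ}

theorem Δ_eq_prod_abs (p : Fin M → ℝ) (A : Fin M → Bool) :
    Δ p A = ∏ k, ∏ j ∈ Iio k, |sgn (A k) * p k - sgn (A j) * p j| := by
  simp only [Δ, abs_prod]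

theorem Δ_false_eq_prod_abs (p : Fin M → ℝ) :
    Δ p (fun _ => false) = ∏ k, ∏ j ∈ Iio k, |p k - p j| := by
  simp only [Δ_eq_prod_abs, sgn, Bool.false_eq_true, if_false, neg_one_mul, neg_sub_neg,
    abs_sub_comm]

theorem Δ_false_pos (hinj : Function.Injective p) : 0 < Δ p fun _ => false := by
  rw [Δ_false_eq_prod_abs]
  exact prod_pos fun k _ => prod_pos fun j hj =>
    abs_pos.2 (sub_ne_zero.2 (hinj.ne (mem_Iio.1 hj).ne'))

theorem sum_mu_mul_log_prod_erase (hinj : Function.Injective p)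
    (hadd : ∀ j k, j ≠ k → p j + p k ≠ 0) (A : Fin M → Bool) :
    ∑ j, mu (A j) * log (∏ k ∈ univ.erase j, |(p k + p j) / (p k - p j)|) =
      ∑ k, ∑ j ∈ Iio k, (mu (A j) * log |(p k + p j) / (p k - p j)|
        + mu (A k) * log |(p j + p k) / (p j - p k)|) := by
  have hfactor (j k : Fin M) (hk : k ∈ univ.erase j) : |(p k + p j) / (p k - p j)| ≠ 0 := by
    have hkj := ne_of_mem_erase hk
    exact abs_ne_zero.2 (div_ne_zero (hadd k j hkj) (sub_ne_zero.2 (hinj.ne hkj)))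
  simp only [log_prod (hfactor _), mul_sum]
  exact sum_sum_erase_eq_sum_sum_Iio fun j k => mu (A j) * log |(p k + p j) / (p k - p j)|

theorem exp_hirota_exponent (hinj : Function.Injective p)
    (hadd : ∀ j k, j ≠ k → p j + p k ≠ 0) (θ : Fin M → ℝ) (A : Fin M → Bool) :
    exp ((∑ j, mu (A j) * (2 * θ j + log (∏ k ∈ univ.erase j, |(p k + p j) / (p k - p j)|)))
        + ∑ k, ∑ j ∈ Iio k, log ((p k - p j) ^ 2 / (p k + p j) ^ 2) * mu (A j) * mu (A k)) =
      exp (∑ j, mu (A j) * (2 * θ j)) * (Δ p A / Δ p fun _ => false) := by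
  have hpair (k : Fin M) (j : Fin M) (hj : j ∈ Iio k) :
      exp (mu (A j) * log |(p k + p j) / (p k - p j)| + mu (A k) * log |(p j + p k) / (p j - p k)|
          + log ((p k - p j) ^ 2 / (p k + p j) ^ 2) * mu (A j) * mu (A k)) =
        |sgn (A k) * p k - sgn (A j) * p j| / |p k - p j| :=
    exp_pair_exponent (hadd k j (mem_Iio.1 hj).ne') (hinj.ne (mem_Iio.1 hj).ne') _ _
  calc _ = exp ((∑ j, mu (A j) * (2 * θ j)) + ∑ k, ∑ j ∈ Iio k,
          (mu (A j) * log |(p k + p j) / (p k - p j)| + mu (A k) * log |(p j + p k) / (p j - p k)|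
            + log ((p k - p j) ^ 2 / (p k + p j) ^ 2) * mu (A j) * mu (A k))) := by
        simp only [mul_add, sum_add_distrib, sum_mu_mul_log_prod_erase hinj hadd, add_assoc]
    _ = exp (∑ j, mu (A j) * (2 * θ j)) *
          ∏ k, ∏ j ∈ Iio k, |sgn (A k) * p k - sgn (A j) * p j| / |p k - p j| := by
        rw [exp_add, exp_sum (s := univ)]
        simp only [exp_sum, prod_congr rfl (hpair _)]
    _ = _ := by
        rw [Δ_false_eq_prod_abs, Δ_eq_prod_abs]
        simp only [prod_div_distrib]

end Vandermonde

theorem tauH_eq_tau {M : ℕ} (p θ : Fin M → ℝ)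
    (hp : ∀ j, 0 < p j) (hmono : StrictMono p) :
    (∑ A : Fin M → Bool,
        Real.exp ((∑ j, mu (A j) *
            (2 * θ j + Real.log (∏ k ∈ Finset.univ.erase j, |(p k + p j) / (p k - p j)|)))
          + ∑ k, ∑ j ∈ Finset.Iio k,
              Real.log ((p k - p j)^2 / (p k + p j)^2) * mu (A j) * mu (A k))) =
      (1 / Δ p (fun _ => false)) * Real.exp (∑ j, θ j) *
        (∑ A : Fin M → Bool, Δ p A * Real.exp (∑ j, sgn (A j) * θ j)) := by
  have hinj := hmono.injective
  have hadd (j k : Fin M) (_ : j ≠ k) : p j + p k ≠ 0 := (add_pos (hp j) (hp k)).ne'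
  have hΔ := (Δ_false_pos hinj).ne'
  rw [mul_sum]
  refine sum_congr rfl fun A _ => ?_
  rw [exp_hirota_exponent hinj hadd, sum_mu_mul_two_mul, exp_add]
  field_simp
end

section
/- If τ = e^{Θ_A} + e^{Θ_B} + e^{Θ_C} with Θ_X(x) = p_X x + c_X affine and p_A, p_B, p_C pairwise distinct, then at a point where Θ_A = Θ_B = Θ_C, the quantity u = 2 (log τ)_{xx} equals (4/9)(p_A² + p_B² + p_C² − p_A p_B − p_A p_C − p_B p_C). -/
/-!
The `k`-th moments `Mₖ(x) = ∑ pᵢᵏ exp(pᵢ x + cᵢ)` of a sum of exponentials satisfy `Mₖ' = Mₖ₊₁`,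
so `(log M₀)'' = M₂/M₀ - (M₁/M₀)²` is the variance of the `pᵢ` under the weights
`exp(pᵢ x + cᵢ)/M₀`. Where all phases `pᵢ x + cᵢ` coincide these weights are uniform, and for
three exponentials the uniform variance is `(2/9)(p_A² + p_B² + p_C² - p_A p_B - p_A p_C - p_B p_C)`.
-/

open Real Finset

namespace ExpSum

variable {ι : Type*} (s : Finset ι) (p c : ι → ℝ)

noncomputable def moment (k : ℕ) (x : ℝ) : ℝ :=
  ∑ i ∈ s, p i ^ k * exp (p i * x + c i)

theorem hasDerivAt_moment (k : ℕ) (x : ℝ) :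
    HasDerivAt (moment s p c k) (moment s p c (k + 1) x) x := by
  unfold moment
  refine HasDerivAt.fun_sum fun i _ => ?_
  have hphase : HasDerivAt (fun x => p i * x + c i) (p i) x := by
    simpa using ((hasDerivAt_id x).const_mul (p i)).add_const (c i)
  exact (hphase.exp.const_mul (p i ^ k)).congr_deriv (by ring)

variable {s}

theorem moment_zero_pos (hs : s.Nonempty) (x : ℝ) : 0 < moment s p c 0 x := by
  unfold moment
  exact sum_pos (fun i _ => by positivity) hs

theorem deriv_deriv_log_moment_zero (hs : s.Nonempty) (x : ℝ) :
    deriv (deriv fun y => log (moment s p c 0 y)) x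
      = moment s p c 2 x / moment s p c 0 x - (moment s p c 1 x / moment s p c 0 x) ^ 2 := by
  have hpos := moment_zero_pos p c hs
  have hderiv :
      deriv (fun y => log (moment s p c 0 y)) = fun y => moment s p c 1 y / moment s p c 0 y :=
    funext fun y => ((hasDerivAt_moment s p c 0 y).log (hpos y).ne').deriv
  rw [hderiv,
    ((hasDerivAt_moment s p c 1 x).fun_div (hasDerivAt_moment s p c 0 x) (hpos x).ne').deriv]
  field_simp [(hpos x).ne']

theorem moment_of_phases_eq {x θ : ℝ} (hphase : ∀ i ∈ s, p i * x + c i = θ) (k : ℕ) :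
    moment s p c k x = (∑ i ∈ s, p i ^ k) * exp θ := by
  rw [moment, sum_mul]
  exact sum_congr rfl fun i hi => by rw [hphase i hi]

theorem deriv_deriv_log_moment_zero_of_phases_eq (hs : s.Nonempty) {x θ : ℝ}
    (hphase : ∀ i ∈ s, p i * x + c i = θ) :
    deriv (deriv fun y => log (moment s p c 0 y)) x
      = (∑ i ∈ s, p i ^ 2) / #s - ((∑ i ∈ s, p i) / #s) ^ 2 := by
  rw [deriv_deriv_log_moment_zero p c hs]
  simp only [moment_of_phases_eq p c hphase, pow_zero, sum_const, nsmul_eq_mul, mul_one, pow_one]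
  have hexp := (exp_pos θ).ne'
  rw [mul_div_mul_right _ _ hexp, mul_div_mul_right _ _ hexp]

end ExpSum

theorem triple_phase_amplitude_general (pA pB pC cA cB cC x₀ : ℝ)
    (heqAB : pA * x₀ + cA = pB * x₀ + cB)
    (heqBC : pB * x₀ + cB = pC * x₀ + cC) :
    2 * deriv (deriv (fun x => Real.log
        (Real.exp (pA * x + cA) + Real.exp (pB * x + cB) + Real.exp (pC * x + cC)))) x₀
      = (4/9) * (pA^2 + pB^2 + pC^2 - pA*pB - pA*pC - pB*pC) := by
  have hτ : (fun x => log (exp (pA * x + cA) + exp (pB * x + cB) + exp (pC * x + cC)))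
      = fun x => log (ExpSum.moment univ ![pA, pB, pC] ![cA, cB, cC] 0 x) := by
    funext x
    simp [ExpSum.moment, Fin.sum_univ_three]
  have hphase : ∀ i ∈ (univ : Finset (Fin 3)),
      ![pA, pB, pC] i * x₀ + ![cA, cB, cC] i = pA * x₀ + cA := by
    intro i _
    fin_cases i <;> simp [heqAB, heqBC]
  rw [hτ, ExpSum.deriv_deriv_log_moment_zero_of_phases_eq _ _ univ_nonempty hphase]
  simp [Fin.sum_univ_three]
  ring

theorem triple_phase_amplitude (pA pB pC cA cB cC x₀ : ℝ)
    (hAB : pA ≠ pB) (hAC : pA ≠ pC) (hBC : pB ≠ pC)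
    (heqAB : pA * x₀ + cA = pB * x₀ + cB)
    (heqBC : pB * x₀ + cB = pC * x₀ + cC) :
    2 * deriv (deriv (fun x => Real.log
        (Real.exp (pA * x + cA) + Real.exp (pB * x + cB) + Real.exp (pC * x + cC)))) x₀
      = (4/9) * (pA^2 + pB^2 + pC^2 - pA*pB - pA*pC - pB*pC) :=
  triple_phase_amplitude_general pA pB pC cA cB cC x₀ heqAB heqBC
end

section
/- For the 2-soliton KdV solution with c_1 = c_2 = 0, u_{xx}(0,0) = −4(p_2−p_1)(p_2+p_1)(p_2² − 3p_1²). Consequently, the profile u(x,0) has a strict local minimum at x = 0 if p_2/p_1 < √3 and a strict local maximum if p_2/p_1 > √3. -/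
open Real

noncomputable def tau2 (p₁ p₂ x t : ℝ) : ℝ :=
  (p₂ - p₁) * (Real.exp (-(p₁*(x + p₁^2*t)) - p₂*(x + p₂^2*t))
      + Real.exp (p₁*(x + p₁^2*t) + p₂*(x + p₂^2*t)))
    + (p₁ + p₂) * (Real.exp (p₁*(x + p₁^2*t) - p₂*(x + p₂^2*t))
      + Real.exp (-(p₁*(x + p₁^2*t)) + p₂*(x + p₂^2*t)))

noncomputable def u2 (p₁ p₂ x t : ℝ) : ℝ :=
  2 * deriv (deriv (fun y => Real.log (tau2 p₁ p₂ y t))) x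

/-!
At `t = 0` the tau function is `τ = 2 (b cosh (a x) + a cosh (b x))` with `a = p₁ + p₂` and
`b = p₂ - p₁`: positive and even. With `mₖ = τ⁽ᵏ⁾ / τ` one has `mₖ' = mₖ₊₁ - mₖ m₁`, so the
derivatives of `log τ` are polynomials in the `mₖ`. At the even point `x = 0` we have
`m₁ = m₃ = 0`, hence `u_x(0) = 0` and `u_xx(0) = 2 (m₄ - 3 m₂²) = 2ab (a² - 4ab + b²)`, which is
the claimed value. Its sign decides the extremum through a strict second derivative test.
-/

open Filter Topology Set

theorem eventually_lt_of_deriv_deriv_pos {f : ℝ → ℝ} {x₀ : ℝ} (hf : 0 < deriv (deriv f) x₀)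
    (hd : deriv f x₀ = 0) (hc : ContinuousAt f x₀) : ∀ᶠ x in 𝓝[≠] x₀, f x₀ < f x := by
  obtain ⟨ε, hε, hsign⟩ :=
    Metric.eventually_nhds_iff.mp (eventually_nhdsWithin_sign_eq_of_deriv_pos hf hd)
  have hcont : ∀ y, dist y x₀ < ε → ContinuousAt f y := by
    intro y hy
    rcases eq_or_ne y x₀ with rfl | hne
    · exact hc
    refine (differentiableAt_of_deriv_ne_zero fun h0 => hne ?_).continuousAt
    have := hsign hy
    rwa [h0, _root_.sign_zero, eq_comm, _root_.sign_eq_zero_iff, sub_eq_zero] at this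
  filter_upwards [nhdsWithin_le_nhds (Metric.ball_mem_nhds x₀ hε), self_mem_nhdsWithin]
    with x hx hne
  have hball : ∀ y ∈ uIcc x x₀, dist y x₀ < ε := fun y hy =>
    (Real.dist_right_le_of_mem_uIcc hy).trans_lt hx
  have hcontOn : ContinuousOn f (uIcc x x₀) := fun y hy =>
    (hcont y (hball y hy)).continuousWithinAt
  rcases lt_or_gt_of_ne hne with hlt | hgt
  · rw [uIcc_of_le hlt.le] at hball hcontOn
    refine strictAntiOn_of_deriv_neg (convex_Icc x x₀) hcontOn (fun y hy => ?_)
      ⟨le_rfl, hlt.le⟩ ⟨hlt.le, le_rfl⟩ hlt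
    rw [interior_Icc] at hy
    have := hsign (hball y (Ioo_subset_Icc_self hy))
    rwa [sign_neg (sub_neg.mpr hy.2), sign_eq_neg_one_iff] at this
  · rw [uIcc_of_ge hgt.le] at hball hcontOn
    refine strictMonoOn_of_deriv_pos (convex_Icc x₀ x) hcontOn (fun y hy => ?_)
      ⟨le_rfl, hgt.le⟩ ⟨hgt.le, le_rfl⟩ hgt
    rw [interior_Icc] at hy
    have := hsign (hball y (Ioo_subset_Icc_self hy))
    rwa [sign_pos (sub_pos.mpr hy.1), sign_eq_one_iff] at this

theorem eventually_gt_of_deriv_deriv_neg {f : ℝ → ℝ} {x₀ : ℝ} (hf : deriv (deriv f) x₀ < 0)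
    (hd : deriv f x₀ = 0) (hc : ContinuousAt f x₀) : ∀ᶠ x in 𝓝[≠] x₀, f x < f x₀ := by
  simpa using eventually_lt_of_deriv_deriv_pos (f := (-f ·)) (by simpa [deriv.neg'])
    (by simpa [deriv.neg']) hc.neg

theorem exists_pos_forall_abs_lt_of_eventually_nhdsNE {P : ℝ → Prop}
    (h : ∀ᶠ x in 𝓝[≠] (0 : ℝ), P x) : ∃ δ > 0, ∀ x : ℝ, x ≠ 0 → |x| < δ → P x := by
  obtain ⟨δ, hδ, hP⟩ := Metric.eventually_nhds_iff.mp (eventually_nhdsWithin_iff.mp h)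
  exact ⟨δ, hδ, fun x hx hxδ => hP (by rwa [Real.dist_0_eq_abs]) hx⟩

theorem HasDerivAt.div_logDeriv {σ τ : ℝ → ℝ} {σ' τ' x : ℝ} (hσ : HasDerivAt σ σ' x)
    (hτ : HasDerivAt τ τ' x) (hx : τ x ≠ 0) :
    HasDerivAt (fun y => σ y / τ y) (σ' / τ x - σ x / τ x * (τ' / τ x)) x :=
  (hσ.div hτ hx).congr_deriv (by field_simp)

noncomputable def logPotential (τ : ℝ → ℝ) (x : ℝ) : ℝ :=
  2 * deriv (deriv fun y => log (τ y)) x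

section LogDeriv

variable {τ τ₁ τ₂ τ₃ τ₄ : ℝ → ℝ}

theorem deriv_log_comp_eq (hτ : ∀ x, 0 < τ x) (h₁ : ∀ x, HasDerivAt τ (τ₁ x) x) :
    deriv (fun y => log (τ y)) = fun x => τ₁ x / τ x :=
  funext fun x => ((h₁ x).log (hτ x).ne').deriv

theorem hasDerivAt_deriv_log_comp (hτ : ∀ x, 0 < τ x) (h₁ : ∀ x, HasDerivAt τ (τ₁ x) x)
    (h₂ : ∀ x, HasDerivAt τ₁ (τ₂ x) x) (x : ℝ) :
    HasDerivAt (deriv fun y => log (τ y)) (τ₂ x / τ x - (τ₁ x / τ x) ^ 2) x := by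
  rw [deriv_log_comp_eq hτ h₁]
  exact ((h₂ x).div_logDeriv (h₁ x) (hτ x).ne').congr_deriv (by ring)

theorem hasDerivAt_deriv_deriv_log_comp (hτ : ∀ x, 0 < τ x) (h₁ : ∀ x, HasDerivAt τ (τ₁ x) x)
    (h₂ : ∀ x, HasDerivAt τ₁ (τ₂ x) x) (h₃ : ∀ x, HasDerivAt τ₂ (τ₃ x) x) (x : ℝ) :
    HasDerivAt (deriv (deriv fun y => log (τ y)))
      (τ₃ x / τ x - 3 * (τ₂ x / τ x) * (τ₁ x / τ x) + 2 * (τ₁ x / τ x) ^ 3) x := by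
  rw [funext fun y => (hasDerivAt_deriv_log_comp hτ h₁ h₂ y).deriv]
  have hm₁ := (h₂ x).div_logDeriv (h₁ x) (hτ x).ne'
  have hm₂ := (h₃ x).div_logDeriv (h₁ x) (hτ x).ne'
  exact (hm₂.sub (hm₁.fun_pow 2)).congr_deriv (by ring)

theorem hasDerivAt_deriv_deriv_deriv_log_comp (hτ : ∀ x, 0 < τ x)
    (h₁ : ∀ x, HasDerivAt τ (τ₁ x) x) (h₂ : ∀ x, HasDerivAt τ₁ (τ₂ x) x)
    (h₃ : ∀ x, HasDerivAt τ₂ (τ₃ x) x) (h₄ : ∀ x, HasDerivAt τ₃ (τ₄ x) x) {x : ℝ}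
    (hx : τ₁ x = 0) :
    HasDerivAt (deriv (deriv (deriv fun y => log (τ y))))
      (τ₄ x / τ x - 3 * (τ₂ x / τ x) ^ 2) x := by
  rw [funext fun y => (hasDerivAt_deriv_deriv_log_comp hτ h₁ h₂ h₃ y).deriv]
  have hm₁ := (h₂ x).div_logDeriv (h₁ x) (hτ x).ne'
  have hm₂ := (h₃ x).div_logDeriv (h₁ x) (hτ x).ne'
  have hm₃ := (h₄ x).div_logDeriv (h₁ x) (hτ x).ne'
  have h := (hm₃.sub ((hm₂.const_mul 3).fun_mul hm₁)).add ((hm₁.fun_pow 3).const_mul 2)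
  exact h.congr_deriv (by simp only [hx]; ring)

theorem continuous_logPotential (hτ : ∀ x, 0 < τ x) (h₁ : ∀ x, HasDerivAt τ (τ₁ x) x)
    (h₂ : ∀ x, HasDerivAt τ₁ (τ₂ x) x) (h₃ : ∀ x, HasDerivAt τ₂ (τ₃ x) x) :
    Continuous (logPotential τ) :=
  continuous_const.mul <| continuous_iff_continuousAt.mpr fun x =>
    (hasDerivAt_deriv_deriv_log_comp hτ h₁ h₂ h₃ x).continuousAt

theorem deriv_logPotential_eq_zero (hτ : ∀ x, 0 < τ x) (h₁ : ∀ x, HasDerivAt τ (τ₁ x) x)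
    (h₂ : ∀ x, HasDerivAt τ₁ (τ₂ x) x) (h₃ : ∀ x, HasDerivAt τ₂ (τ₃ x) x) {x : ℝ}
    (hx₁ : τ₁ x = 0) (hx₃ : τ₃ x = 0) : deriv (logPotential τ) x = 0 := by
  unfold logPotential
  rw [deriv_const_mul_field, (hasDerivAt_deriv_deriv_log_comp hτ h₁ h₂ h₃ x).deriv]
  simp [hx₁, hx₃]

theorem deriv_deriv_logPotential (hτ : ∀ x, 0 < τ x) (h₁ : ∀ x, HasDerivAt τ (τ₁ x) x)
    (h₂ : ∀ x, HasDerivAt τ₁ (τ₂ x) x) (h₃ : ∀ x, HasDerivAt τ₂ (τ₃ x) x)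
    (h₄ : ∀ x, HasDerivAt τ₃ (τ₄ x) x) {x : ℝ} (hx : τ₁ x = 0) :
    deriv (deriv (logPotential τ)) x = 2 * (τ₄ x / τ x - 3 * (τ₂ x / τ x) ^ 2) := by
  unfold logPotential
  rw [deriv_const_mul_field', deriv_const_mul_field,
    (hasDerivAt_deriv_deriv_deriv_log_comp hτ h₁ h₂ h₃ h₄ hx).deriv]

end LogDeriv

/-- The `k`-th derivative of `x ↦ 2 cosh (c x)`. -/
noncomputable def twoCoshDeriv (k : ℕ) (c x : ℝ) : ℝ :=
  c ^ k * (exp (c * x) + (-1) ^ k * exp (-(c * x)))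

theorem hasDerivAt_twoCoshDeriv (k : ℕ) (c x : ℝ) :
    HasDerivAt (twoCoshDeriv k c) (twoCoshDeriv (k + 1) c x) x := by
  have hexp : ∀ d : ℝ, HasDerivAt (fun y => exp (d * y)) (d * exp (d * x)) x := fun d => by
    simpa [mul_comm] using ((hasDerivAt_id x).const_mul d).exp
  have h := ((hexp c).add ((hexp (-c)).const_mul ((-1) ^ k))).const_mul (c ^ k)
  simp only [neg_mul] at h
  exact h.congr_deriv (by unfold twoCoshDeriv; ring)

/-- `tauDeriv (p₁ + p₂) (p₂ - p₁) k` is the `k`-th `x`-derivative of `tau2 p₁ p₂ · 0`. -/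
noncomputable def tauDeriv (a b : ℝ) (k : ℕ) (x : ℝ) : ℝ :=
  b * twoCoshDeriv k a x + a * twoCoshDeriv k b x

theorem hasDerivAt_tauDeriv (a b : ℝ) (k : ℕ) (x : ℝ) :
    HasDerivAt (tauDeriv a b k) (tauDeriv a b (k + 1) x) x :=
  (((hasDerivAt_twoCoshDeriv k a x).const_mul b).add
    ((hasDerivAt_twoCoshDeriv k b x).const_mul a))

theorem tauDeriv_zero_pos {a b : ℝ} (ha : 0 < a) (hb : 0 < b) (x : ℝ) : 0 < tauDeriv a b 0 x := by
  simp only [tauDeriv, twoCoshDeriv]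
  positivity

theorem tauDeriv_apply_zero (a b : ℝ) (k : ℕ) :
    tauDeriv a b k 0 = (1 + (-1) ^ k) * (b * a ^ k + a * b ^ k) := by
  simp only [tauDeriv, twoCoshDeriv, mul_zero, neg_zero, exp_zero]
  ring

theorem tau2_zero_eq (p₁ p₂ x : ℝ) : tau2 p₁ p₂ x 0 = tauDeriv (p₁ + p₂) (p₂ - p₁) 0 x := by
  simp only [tau2, tauDeriv, twoCoshDeriv]
  ring_nf

theorem deriv_logPotential_tauDeriv_zero {a b : ℝ} (ha : 0 < a) (hb : 0 < b) :
    deriv (logPotential (tauDeriv a b 0)) 0 = 0 :=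
  deriv_logPotential_eq_zero (tauDeriv_zero_pos ha hb) (hasDerivAt_tauDeriv a b 0)
    (hasDerivAt_tauDeriv a b 1) (hasDerivAt_tauDeriv a b 2) (by norm_num [tauDeriv_apply_zero])
    (by norm_num [tauDeriv_apply_zero])

theorem deriv_deriv_logPotential_tauDeriv_zero {a b : ℝ} (ha : 0 < a) (hb : 0 < b) :
    deriv (deriv (logPotential (tauDeriv a b 0))) 0 = 2 * a * b * (a ^ 2 - 4 * a * b + b ^ 2) := by
  rw [deriv_deriv_logPotential (tauDeriv_zero_pos ha hb) (hasDerivAt_tauDeriv a b 0)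
    (hasDerivAt_tauDeriv a b 1) (hasDerivAt_tauDeriv a b 2) (hasDerivAt_tauDeriv a b 3)
    (by norm_num [tauDeriv_apply_zero])]
  have : a + b ≠ 0 := by positivity
  simp only [tauDeriv_apply_zero]
  field_simp
  ring

theorem two_soliton_uxx_and_extremum (p₁ p₂ : ℝ) (h1 : 0 < p₁) (h12 : p₁ < p₂) :
    deriv (deriv (fun x => u2 p₁ p₂ x 0)) 0
        = -4 * (p₂ - p₁) * (p₂ + p₁) * (p₂^2 - 3*p₁^2)
    ∧ (p₂ / p₁ < Real.sqrt 3 →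
        ∃ δ > 0, ∀ x : ℝ, x ≠ 0 → |x| < δ → u2 p₁ p₂ 0 0 < u2 p₁ p₂ x 0)
    ∧ (Real.sqrt 3 < p₂ / p₁ →
        ∃ δ > 0, ∀ x : ℝ, x ≠ 0 → |x| < δ → u2 p₁ p₂ x 0 < u2 p₁ p₂ 0 0) := by
  have ha : 0 < p₁ + p₂ := by linarith
  have hb : 0 < p₂ - p₁ := by linarith
  have hu : (fun x => u2 p₁ p₂ x 0) = logPotential (tauDeriv (p₁ + p₂) (p₂ - p₁) 0) := by
    funext x
    simp only [u2, logPotential, tau2_zero_eq]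
  have huxx : deriv (deriv (fun x => u2 p₁ p₂ x 0)) 0
      = -4 * (p₂ - p₁) * (p₂ + p₁) * (p₂^2 - 3*p₁^2) := by
    rw [hu, deriv_deriv_logPotential_tauDeriv_zero ha hb]
    ring
  have hux : deriv (fun x => u2 p₁ p₂ x 0) 0 = 0 := hu ▸ deriv_logPotential_tauDeriv_zero ha hb
  have hcont : ContinuousAt (fun x => u2 p₁ p₂ x 0) 0 := hu ▸ (continuous_logPotential
    (tauDeriv_zero_pos ha hb) (hasDerivAt_tauDeriv _ _ 0) (hasDerivAt_tauDeriv _ _ 1)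
    (hasDerivAt_tauDeriv _ _ 2)).continuousAt
  have hq : 0 < p₂ / p₁ := div_pos (h1.trans h12) h1
  refine ⟨huxx, fun h => ?_, fun h => ?_⟩
  · rw [Real.lt_sqrt hq.le, div_pow, div_lt_iff₀ (by positivity)] at h
    refine exists_pos_forall_abs_lt_of_eventually_nhdsNE
      (eventually_lt_of_deriv_deriv_pos ?_ hux hcont)
    rw [huxx]
    nlinarith [mul_pos (mul_pos hb ha) (sub_pos.mpr h)]
  · rw [Real.sqrt_lt' hq, div_pow, lt_div_iff₀ (by positivity)] at h
    refine exists_pos_forall_abs_lt_of_eventually_nhdsNE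
      (eventually_gt_of_deriv_deriv_neg ?_ hux hcont)
    rw [huxx]
    nlinarith [mul_pos (mul_pos hb ha) (sub_pos.mpr h)]
end

section
/- For the tropical 2-soliton solution with 0 < p_1 < p_2 and ℓ = log((p_2+p_1)/(p_2−p_1)): on the line x = x_{\bar1\bar1,\bar11}(t) = −p_2² t − ℓ/(2p_2), one has Θ_{11} − Θ_{1\bar1} = −2ℓ < 0. Hence the triple coincidence of Θ_{\bar1\bar1}, Θ_{\bar11}, Θ_{11} is non-visible: at that event Θ_{1\bar1} strictly exceeds these three phases. -/
open Real

noncomputable def θ (p x t : ℝ) : ℝ := p * (x + p^2 * t)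

noncomputable def Θmm (p₁ p₂ x t : ℝ) : ℝ := -θ p₁ x t - θ p₂ x t + Real.log (p₂ - p₁)
noncomputable def Θpm (p₁ p₂ x t : ℝ) : ℝ := θ p₁ x t - θ p₂ x t + Real.log (p₁ + p₂)
noncomputable def Θmp (p₁ p₂ x t : ℝ) : ℝ := -θ p₁ x t + θ p₂ x t + Real.log (p₁ + p₂)
noncomputable def Θpp (p₁ p₂ x t : ℝ) : ℝ := θ p₁ x t + θ p₂ x t + Real.log (p₂ - p₁)

noncomputable def ℓ (p₁ p₂ : ℝ) : ℝ := Real.log ((p₂ + p₁) / (p₂ - p₁))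

/-!
The differences `Θmm - Θmp = -2 θ₂ - ℓ` and `Θpp - Θpm = 2 θ₂ - ℓ` involve only `θ₂ = θ p₂ x t`.
So the coincidence `Θmm = Θmp` pins `θ₂ = -ℓ / 2`, which is exactly the line
`x = -p₂² t - ℓ / (2 p₂)`, and there `Θpp - Θpm = -2 ℓ < 0` since `p₂ + p₁ > p₂ - p₁ > 0`.
-/

section

variable {p₁ p₂ : ℝ}

lemma ℓ_eq_log_sub_log (hs : p₂ + p₁ ≠ 0) (hd : p₂ - p₁ ≠ 0) :
    ℓ p₁ p₂ = Real.log (p₁ + p₂) - Real.log (p₂ - p₁) := by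
  rw [ℓ, Real.log_div hs hd, add_comm]

lemma ℓ_pos (h1 : 0 < p₁) (h12 : p₁ < p₂) : 0 < ℓ p₁ p₂ :=
  Real.log_pos <| (one_lt_div (by linarith)).2 (by linarith)

lemma θ_on_line {p : ℝ} (hp : p ≠ 0) (c t : ℝ) : θ p (-p ^ 2 * t - c / (2 * p)) t = -c / 2 := by
  rw [θ]
  field_simp
  ring

lemma Θpp_sub_Θpm (hs : p₂ + p₁ ≠ 0) (hd : p₂ - p₁ ≠ 0) (x t : ℝ) :
    Θpp p₁ p₂ x t - Θpm p₁ p₂ x t = 2 * θ p₂ x t - ℓ p₁ p₂ := by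
  rw [Θpp, Θpm, ℓ_eq_log_sub_log hs hd]
  ring

lemma Θmm_sub_Θmp (hs : p₂ + p₁ ≠ 0) (hd : p₂ - p₁ ≠ 0) (x t : ℝ) :
    Θmm p₁ p₂ x t - Θmp p₁ p₂ x t = -2 * θ p₂ x t - ℓ p₁ p₂ := by
  rw [Θmm, Θmp, ℓ_eq_log_sub_log hs hd]
  ring

end

theorem nonvisible_triple_mm_mp_pp (p₁ p₂ : ℝ) (h1 : 0 < p₁) (h12 : p₁ < p₂) :
    (∀ t : ℝ,
      Θpp p₁ p₂ (-p₂^2 * t - ℓ p₁ p₂ / (2*p₂)) t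
        - Θpm p₁ p₂ (-p₂^2 * t - ℓ p₁ p₂ / (2*p₂)) t = -2 * ℓ p₁ p₂)
    ∧ -2 * ℓ p₁ p₂ < 0
    ∧ (∀ x t : ℝ, Θmm p₁ p₂ x t = Θmp p₁ p₂ x t → Θmp p₁ p₂ x t = Θpp p₁ p₂ x t →
        Θpp p₁ p₂ x t < Θpm p₁ p₂ x t) := by
  have hs : p₂ + p₁ ≠ 0 := by linarith
  have hd : p₂ - p₁ ≠ 0 := by linarith
  have hℓ := ℓ_pos h1 h12
  refine ⟨fun t => ?_, by linarith, fun x t hmm _ => ?_⟩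
  · rw [Θpp_sub_Θpm hs hd, θ_on_line (by linarith) _ t]
    ring
  · have hmm' := Θmm_sub_Θmp hs hd x t
    have hpp := Θpp_sub_Θpm hs hd x t
    linarith
end
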